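/- Let K be a commutative ring, P a finite poset, V ⊆ P a cosieve (upward-closed subset) with inclusion v : V ↪ P, and F ∈ (K-Mod)^P. Then the counit morphism v_! v^* F → F of the adjunction (v_!, v^*) is an isomorphism if and only if F(x) = 0 for all x ∈ P \ V. -/

import Mathlib

/-!
The counit `v_! v^* F → F` is always an isomorphism on `V`, since `v` is fully faithful and
hence the unit of the adjunction is invertible. At a point `p ∉ V` the pointwise formula
computes `(v_! G)(p)` as a colimit over the arrows `v(x) ⟶ p` with `x ∈ V`; as `V` is upward
closed there are none, so `(v_! G)(p) = 0`, and the counit at `p` is an isomorphism exactly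
when `F(p) = 0`.
-/

open CategoryTheory CategoryTheory.Limits

universe u

variable (K : Type u) [CommRing K] (P : Type u) [PartialOrder P]

/-- The inclusion functor of a subposet (a subset of `P` with the induced order). -/
def inclFunctor (V : Set P) : (↥V) ⥤ P :=
  (Subtype.mono_coe (· ∈ V)).functor

namespace CategoryTheory.Functor

variable {C D H : Type*} [Category* C] [Category* D] [Category* H] (L : C ⥤ D)

noncomputable def isInitialLeftKanExtensionObjOfIsEmpty (G : C ⥤ H)
    [L.HasPointwiseLeftKanExtension G] (Y : D) [IsEmpty (CostructuredArrow L Y)] :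
    IsInitial ((L.leftKanExtension G).obj Y) :=
  isColimitEquivIsInitialOfIsEmpty H _ (L.isPointwiseLeftKanExtensionLeftKanExtensionUnit G Y)

instance isIso_lanAdjunction_counit_app_app_obj [L.Full] [L.Faithful]
    [∀ G : C ⥤ H, L.HasLeftKanExtension G] (F : D ⥤ H)
    [L.HasPointwiseLeftKanExtension (L ⋙ F)] (X : C) :
    IsIso (((L.lanAdjunction H).counit.app F).app (L.obj X)) :=
  IsIso.of_isIso_fac_left (L.lanUnit_app_app_lanAdjunction_counit_app_app F X)

end CategoryTheory.Functor

section inclFunctor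

variable {P} (V : Set P)

instance : (inclFunctor P V).Full where
  map_surjective f := ⟨homOfLE (Subtype.coe_le_coe.mp (leOfHom f)), rfl⟩

instance : (inclFunctor P V).Faithful where
  map_injective _ := Subsingleton.elim _ _

lemma isEmpty_costructuredArrow_inclFunctor {V} (hV : IsUpperSet V) {p : P} (hp : p ∉ V) :
    IsEmpty (CostructuredArrow (inclFunctor P V) p) :=
  ⟨fun f => hp (hV (leOfHom f.hom) f.left.2)⟩

end inclFunctor

theorem statement_13 (V : Set P)
    (hV : ∀ ⦃a b : P⦄, a ≤ b → a ∈ V → b ∈ V) (F : P ⥤ ModuleCat.{u} K) :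
    IsIso (((inclFunctor P V).lanAdjunction (ModuleCat.{u} K)).counit.app F) ↔
      ∀ p : P, p ∉ V → IsZero (F.obj p) := by
  set ε := ((inclFunctor P V).lanAdjunction (ModuleCat.{u} K)).counit.app F
  have isZero_source (p : P) (hp : p ∉ V) :
      IsZero (((inclFunctor P V).lan.obj (inclFunctor P V ⋙ F)).obj p) :=
    have := isEmpty_costructuredArrow_inclFunctor hV hp
    ((inclFunctor P V).isInitialLeftKanExtensionObjOfIsEmpty _ p).isZero
  rw [NatTrans.isIso_iff_isIso_app]
  refine ⟨fun _ p hp => (isZero_source p hp).of_iso (asIso (ε.app p)).symm, fun hF p => ?_⟩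
  by_cases hp : p ∈ V
  · exact (inclFunctor P V).isIso_lanAdjunction_counit_app_app_obj F ⟨p, hp⟩
  · exact (isZero_source p hp).isIso (hF p hp) _
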